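/- Let G be a torsion-free CSA group and A a subgroup of G. Suppose G = G₁ ∗_C G₂ is an amalgamated free product over an abelian subgroup C that is a maximal abelian subgroup of G₁ and a maximal abelian subgroup of G₂, and suppose A ≤ G₁. Then racl_G(A) ≤ G₁; in particular acl(A) ≤ G₁. -/

import Mathlib

open FirstOrder Filter

/-! Common definitions: the first-order language of groups, algebraic/definable closures,
free products, amalgams, HNN extensions, etc. -/

/-- Function symbols of the language of groups: `1`, `⁻¹`, `·`. -/
inductive GrpFunc : ℕ → Type
  | one : GrpFunc 0
  | inv : GrpFunc 1
  | mul : GrpFunc 2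

/-- The first-order language of groups `L = {·, ⁻¹, 1}` (no relation symbols). -/
def grpLang : FirstOrder.Language := ⟨GrpFunc, fun _ => Empty⟩

/-- Every group is a `grpLang`-structure in the natural way. -/
instance grpStructure (G : Type*) [Group G] : grpLang.Structure G where
  funMap {_} f := match f with
    | .one => fun _ => (1 : G)
    | .inv => fun x => (x 0)⁻¹
    | .mul => fun x => x 0 * x 1
  RelMap {_} r := Empty.elim r

/-- A formula is existential if it is obtained from a quantifier-free formula by
prefixing existential quantifiers. -/
def IsExistential {L : FirstOrder.Language} {α : Type*} (φ : L.Formula α) : Prop :=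
  ∃ (n : ℕ) (ψ : L.BoundedFormula α n), ψ.IsQF ∧ φ = ψ.exs

section ModelTheory

variable (L : FirstOrder.Language) {M : Type*} [L.Structure M]

/-- The algebraic closure of a set of parameters `A` in an `L`-structure `M`:
elements satisfying, together with only finitely many other elements, some formula
with parameters from `A`. -/
def Lacl (A : Set M) : Set M :=
  {b | ∃ φ : L.Formula (↥A ⊕ Fin 1),
    {c : M | φ.Realize (Sum.elim Subtype.val fun _ => c)}.Finite ∧
    φ.Realize (Sum.elim Subtype.val fun _ => b)}

/-- The definable closure of a set of parameters `A` in an `L`-structure `M`. -/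
def Ldcl (A : Set M) : Set M :=
  {b | ∃ φ : L.Formula (↥A ⊕ Fin 1),
    {c : M | φ.Realize (Sum.elim Subtype.val fun _ => c)} = {b}}

/-- The existential algebraic closure of `A` in `M`. -/
def LaclE (A : Set M) : Set M :=
  {b | ∃ φ : L.Formula (↥A ⊕ Fin 1), IsExistential φ ∧
    {c : M | φ.Realize (Sum.elim Subtype.val fun _ => c)}.Finite ∧
    φ.Realize (Sum.elim Subtype.val fun _ => b)}

/-- The existential definable closure of `A` in `M`. -/
def LdclE (A : Set M) : Set M :=
  {b | ∃ φ : L.Formula (↥A ⊕ Fin 1), IsExistential φ ∧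
    {c : M | φ.Realize (Sum.elim Subtype.val fun _ => c)} = {b}}

end ModelTheory

section GroupDefs

variable {G : Type*} [Group G]

/-- Algebraic closure in a group, w.r.t. the language of groups. -/
def acl (A : Set G) : Set G := Lacl grpLang A

/-- Definable closure in a group, w.r.t. the language of groups. -/
def dcl (A : Set G) : Set G := Ldcl grpLang A

/-- Existential algebraic closure in a group. -/
def aclE (A : Set G) : Set G := LaclE grpLang A

/-- Existential definable closure in a group. -/
def dclE (A : Set G) : Set G := LdclE grpLang A

/-- Restricted algebraic closure: elements with finite orbit under automorphisms
of `G` fixing `A` pointwise. -/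
def racl (A : Set G) : Set G :=
  {g | {x : G | ∃ f : G ≃* G, (∀ a ∈ A, f a = a) ∧ f g = x}.Finite}

/-- Restricted definable closure: elements fixed by every automorphism of `G`
fixing `A` pointwise. -/
def rdcl (A : Set G) : Set G :=
  {g | ∀ f : G ≃* G, (∀ a ∈ A, f a = a) → f g = g}

/-- A set of group elements is nonabelian (contains two non-commuting elements). -/
def Nonabelian (A : Set G) : Prop := ∃ x ∈ A, ∃ y ∈ A, x * y ≠ y * x

/-- `F` is a free group of finite rank. -/
def IsFreeOfFiniteRank (F : Type*) [Group F] : Prop :=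
  ∃ n : ℕ, Nonempty (F ≃* FreeGroup (Fin n))

/-- `G` is the internal free product of its subgroups `H` and `K`: the canonical
homomorphism from the abstract free product `H ∗ K` to `G` is an isomorphism. -/
def InternalFreeProduct (H K : Subgroup G) : Prop :=
  Function.Bijective (Monoid.Coprod.lift H.subtype K.subtype)

/-- `G` is freely indecomposable relative to its subgroup `A`. -/
def FreelyIndecomposableRel (A : Subgroup G) : Prop :=
  ¬ ∃ G₁ G₂ : Subgroup G, G₁ ≠ ⊥ ∧ G₂ ≠ ⊥ ∧ A ≤ G₁ ∧ InternalFreeProduct G₁ G₂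

/-- `B` is a free factor of the subgroup `K`: there is `L` such that the canonical
homomorphism from the abstract free product `B ∗ L` to the ambient group is injective
with image exactly `K`. -/
def IsFreeFactorOf (B K : Subgroup G) : Prop :=
  ∃ L : Subgroup G,
    Function.Injective (Monoid.Coprod.lift B.subtype L.subtype) ∧
    (Monoid.Coprod.lift B.subtype L.subtype).range = K

/-- `K'` is the amalgamated free product `K ∗_C B` inside the ambient group `G`:
the canonical homomorphism from the abstract amalgamated product (pushout) of `K` and
`B` over `C` to `G` is injective with image exactly `K'`. -/
def IsAmalgamOf (K B C : Subgroup G) (hCK : C ≤ K) (hCB : C ≤ B) (K' : Subgroup G) : Prop :=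
  ∃ ℓ : Monoid.PushoutI
      (fun i : Bool =>
        (Subgroup.inclusion (show C ≤ cond i K B by cases i <;> assumption) :
          ↥C →* ↥(cond i K B))) →* G,
    (∀ i : Bool, ℓ.comp (Monoid.PushoutI.of i) = (cond i K B).subtype) ∧
    Function.Injective ℓ ∧ ℓ.range = K'

/-- `K'` is the HNN extension of `K` along `φ : C ≃* D` inside the ambient group `G`:
the canonical homomorphism from the abstract HNN extension of `K` along `φ` to `G` is
injective with image exactly `K'` (and is the inclusion on `K`). -/
def IsHNNOf (K : Subgroup G) {C D : Subgroup ↥K} (φ : ↥C ≃* ↥D) (K' : Subgroup G) : Prop :=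
  ∃ ℓ : HNNExtension ↥K C D φ →* G,
    ℓ.comp HNNExtension.of = K.subtype ∧ Function.Injective ℓ ∧ ℓ.range = K'

/-- One constructibility step: `K'` is an amalgamated free product of `K` with some
subgroup over a cyclic subgroup, or an HNN extension of `K` along an isomorphism of two
cyclic subgroups of `K`. -/
def ConstructStep (K K' : Subgroup G) : Prop :=
  (∃ (B C : Subgroup G) (hCK : C ≤ K) (hCB : C ≤ B),
      (∃ c : G, C = Subgroup.zpowers c) ∧ B ≤ K' ∧ K ≤ K' ∧ IsAmalgamOf K B C hCK hCB K')
  ∨ (∃ (C D : Subgroup ↥K) (φ : ↥C ≃* ↥D),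
      (∃ c : ↥K, C = Subgroup.zpowers c) ∧ (∃ d : ↥K, D = Subgroup.zpowers d) ∧ IsHNNOf K φ K')

/-- `B` is constructible from `A` by a finite sequence of amalgamated free products and
HNN-extensions along cyclic subgroups. -/
def ConstructibleFrom (A B : Subgroup G) : Prop := Relation.ReflTransGen ConstructStep A B

/-- The rank of a subgroup: the least cardinality of a generating set. For (subgroups of)
free groups this is the cardinality of a basis. -/
noncomputable def srank (H : Subgroup G) : Cardinal :=
  sInf {c : Cardinal | ∃ S : Set G, Subgroup.closure S = H ∧ c = Cardinal.mk ↥S}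

/-- `M` is a maximal abelian subgroup. -/
def IsMaxAbelian (M : Subgroup G) : Prop :=
  (∀ x ∈ M, ∀ y ∈ M, x * y = y * x) ∧
  ∀ N : Subgroup G, (∀ x ∈ N, ∀ y ∈ N, x * y = y * x) → M ≤ N → M = N

/-- `M` is a maximal abelian subgroup of the subgroup `H`. -/
def IsMaxAbelianIn (M H : Subgroup G) : Prop :=
  M ≤ H ∧ (∀ x ∈ M, ∀ y ∈ M, x * y = y * x) ∧
  ∀ N : Subgroup G, N ≤ H → (∀ x ∈ N, ∀ y ∈ N, x * y = y * x) → M ≤ N → M = N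

/-- `M` is a malnormal subgroup: `gMg⁻¹ ∩ M = 1` for every `g ∉ M`. -/
def Malnormal (M : Subgroup G) : Prop :=
  ∀ g : G, g ∉ M → ∀ x ∈ M, g * x * g⁻¹ ∈ M → x = 1

/-- A group is CSA if every maximal abelian subgroup is malnormal. -/
def IsCSA (G : Type*) [Group G] : Prop := ∀ M : Subgroup G, IsMaxAbelian M → Malnormal M

/-- Every abelian subgroup of `G` is cyclic. -/
def AbelianSubgroupsCyclic (G : Type*) [Group G] : Prop :=
  ∀ H : Subgroup G, (∀ x ∈ H, ∀ y ∈ H, x * y = y * x) → ∃ g : G, H = Subgroup.zpowers g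

/-- `G` is equationally noetherian: every system of equations over `G` in finitely many
variables is equivalent to a finite subsystem. -/
def EqNoetherian (G : Type*) [Group G] : Prop :=
  ∀ n : ℕ, 0 < n → ∀ S : Set (Monoid.Coprod G (FreeGroup (Fin n))),
    ∃ S₀ : Set (Monoid.Coprod G (FreeGroup (Fin n))), S₀ ⊆ S ∧ S₀.Finite ∧
      ∀ f : Monoid.Coprod G (FreeGroup (Fin n)) →* G,
        f.comp Monoid.Coprod.inl = MonoidHom.id G →
        ((∀ s ∈ S₀, f s = 1) ↔ ∀ s ∈ S, f s = 1)

/-- A group homomorphism is elementary w.r.t. the language of groups: it preserves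
and reflects all first-order formulas. -/
def ElementaryEmb {H K : Type*} [Group H] [Group K] (e : H →* K) : Prop :=
  ∀ (n : ℕ) (φ : grpLang.Formula (Fin n)) (v : Fin n → H),
    (φ.Realize fun i => e (v i)) ↔ φ.Realize v

/-- The inclusion of the subgroup `H` is an elementary embedding; i.e. the ambient group
is an elementary extension of `H`. -/
def ElementarySub (H : Subgroup G) : Prop := ElementaryEmb H.subtype

/-- A sequence of homomorphisms is stable. -/
def StableSeq {K H : Type*} [Group K] [Group H] (h : ℕ → (K →* H)) : Prop :=
  ∀ k : K, (∀ᶠ n in Filter.atTop, h n k = 1) ∨ (∀ᶠ n in Filter.atTop, h n k ≠ 1)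

/-- A sequence of homomorphisms has trivial stable kernel. -/
def TrivialStableKernel {K H : Type*} [Group K] [Group H] (h : ℕ → (K →* H)) : Prop :=
  ∀ k : K, (∀ᶠ n in Filter.atTop, h n k = 1) → k = 1

/-- A stable sequence of homomorphisms `g n : D → H` with trivial stable kernel strongly
converges to `D`, where `D` is a subgroup of an extension of the base group `H`, the base
group being embedded via `e`. -/
def StronglyConverges {H Gs : Type*} [Group H] [Group Gs] (e : H →* Gs)
    (D : Subgroup Gs) (g : ℕ → (↥D →* H)) : Prop :=
  StableSeq g ∧ TrivialStableKernel g ∧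
  (∀ (d : ↥D) (b : H), (d : Gs) = e b → ∀ᶠ n in Filter.atTop, g n d = b) ∧
  (∀ (d : ↥D) (b : H), (∃ᶠ n in Filter.atTop, g n d = b) → (d : Gs) = e b)

/-- The ball of radius `r` about the identity in the word metric w.r.t. `S`. -/
def wordBall (S : Set G) (r : ℕ) : Set G :=
  {g | ∃ l : List G, l.length ≤ r ∧ (∀ x ∈ l, x ∈ S ∨ x⁻¹ ∈ S) ∧ l.prod = g}

end GroupDefs


/-! The twist `τ_c` of `G = G₁ ∗_C G₂` by `c ∈ C`, the identity on `G₁` and conjugation by `c`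
on `G₂`, is an automorphism fixing `A`, and `c ↦ τ_c` is a homomorphism. If the orbit of `g`
under `Aut(G/A)` is finite, then `τ_c^n g = g` for some `n ≠ 0`. Torsion-freeness gives
`c^n ≠ 1`, and then, `G` being CSA and `C` maximal abelian in `G₂`, no `y ∈ G₂ \ C` has
`⁅c^n, y⁆ ∈ C`. For such a twist, a reduced word fixed by it cannot contain a letter of
`G₂ \ C`: twisting the first such letter changes the length of the normal form. Hence
`g ∈ G₁`. When `C = 1`, maximality forces `G₂ = 1`, so the twist by `1` does the job. The
statement about `acl` follows since automorphisms preserve the truth of formulas. -/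

open scoped commutatorElement

section ModelTheory

def MulEquiv.toGrpLangEquiv {G H : Type*} [Group G] [Group H] (f : G ≃* H) :
    grpLang.Equiv G H where
  toEquiv := f.toEquiv
  map_fun' {_} F x := by
    cases F with
    | one => exact map_one f
    | inv => exact map_inv f (x 0)
    | mul => exact map_mul f (x 0) (x 1)
  map_rel' {_} r := r.elim

theorem acl_subset_racl {G : Type*} [Group G] (A : Set G) : acl A ⊆ racl A := by
  rintro b ⟨ψ, hfin, hb⟩
  refine hfin.subset ?_
  rintro _ ⟨f, hfA, rfl⟩
  have hval : f.toGrpLangEquiv ∘ (Sum.elim Subtype.val fun _ => b : A ⊕ Fin 1 → G) =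
      Sum.elim Subtype.val fun _ => f b := by
    funext s
    cases s with
    | inl a => exact hfA a.1 a.2
    | inr _ => rfl
  have h := FirstOrder.Language.StrongHomClass.realize_formula f.toGrpLangEquiv ψ
    (v := (Sum.elim Subtype.val fun _ => b : A ⊕ Fin 1 → G))
  rw [hval] at h
  exact h.mpr hb

end ModelTheory

section CSA

open Subgroup

variable {G : Type*} [Group G] {C H : Subgroup G}

theorem exists_isMaxAbelian_le (hC : ∀ x ∈ C, ∀ y ∈ C, x * y = y * x) :
    ∃ M : Subgroup G, C ≤ M ∧ IsMaxAbelian M := by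
  obtain ⟨M, hCM, hMmax⟩ := zorn_le_nonempty₀
    {N : Subgroup G | (∀ x ∈ N, ∀ y ∈ N, x * y = y * x) ∧ C ≤ N}
    (fun S hS hchain N hN => by
      refine ⟨sSup S, ⟨fun x hx y hy => ?_, (hS hN).2.trans (le_sSup hN)⟩,
        fun _ => le_sSup⟩
      rw [mem_sSup_of_directedOn ⟨N, hN⟩ hchain.directedOn] at hx hy
      obtain ⟨N₁, hN₁, hx⟩ := hx
      obtain ⟨N₂, hN₂, hy⟩ := hy
      rcases hchain.total hN₁ hN₂ with h | h
      · exact (hS hN₂).1 x (h hx) y hy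
      · exact (hS hN₁).1 x hx y (h hy)) C ⟨hC, le_rfl⟩
  exact ⟨M, hCM, hMmax.1.1, fun N hN hMN =>
    le_antisymm hMN (hMmax.2 ⟨hN, hMmax.1.2.trans hMN⟩ hMN)⟩

theorem IsCSA.mem_of_commutatorElement_mem (hCSA : IsCSA G) (hmax : IsMaxAbelianIn C H)
    {m y : G} (hm : m ∈ C) (hm1 : m ≠ 1) (hy : y ∈ H) (hmy : ⁅m, y⁆ ∈ C) : y ∈ C := by
  obtain ⟨M, hCM, hM⟩ := exists_isMaxAbelian_le hmax.2.1
  have hyM : y ∈ M := by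
    by_contra hyM
    have hconj : y * m⁻¹ * y⁻¹ = m⁻¹ * ⁅m, y⁆ := by rw [commutatorElement_def]; group
    refine hm1 (inv_eq_one.mp (hCSA M hM y hyM m⁻¹ (hCM (C.inv_mem hm)) (hCM ?_)))
    exact hconj ▸ C.mul_mem (C.inv_mem hm) hmy
  rw [hmax.2.2 (M ⊓ H) inf_le_right (fun a ha b hb => hM.1 a ha.1 b hb.1) (le_inf hCM hmax.1)]
  exact ⟨hyM, hy⟩

theorem IsCSA.exists_mem_forall_mem_of_commutatorElement_zpow_mem
    (hTF : ∀ g : G, g ≠ 1 → ¬IsOfFinOrder g) (hCSA : IsCSA G) (hmax : IsMaxAbelianIn C H) :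
    ∃ m ∈ C, ∀ n : ℤ, n ≠ 0 → ∀ y ∈ H, ⁅m ^ n, y⁆ ∈ C → y ∈ C := by
  rcases C.bot_or_exists_ne_one with rfl | ⟨m, hmC, hm1⟩
  · refine ⟨1, one_mem _, fun _ _ y hy _ => ?_⟩
    have hy_bot := hmax.2.2 (zpowers y) (zpowers_le.mpr hy) (fun a ha b hb => ?_) bot_le
    · exact hy_bot ▸ mem_zpowers y
    obtain ⟨j, rfl⟩ := mem_zpowers_iff.mp ha
    obtain ⟨k, rfl⟩ := mem_zpowers_iff.mp hb
    exact zpow_mul_comm y j k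
  · refine ⟨m, hmC, fun n hn y hy => hCSA.mem_of_commutatorElement_mem hmax (C.zpow_mem hmC n)
      (fun h => hTF m hm1 (isOfFinOrder_iff_zpow_eq_one.mpr ⟨n, hn, h⟩)) hy⟩

end CSA

theorem exists_ne_zero_zpow_smul_eq_of_finite {Γ α : Type*} [Group Γ] [MulAction Γ α]
    {γ : Γ} {x : α} (h : (Set.range fun k : ℤ => γ ^ k • x).Finite) :
    ∃ n : ℤ, n ≠ 0 ∧ γ ^ n • x = x := by
  have := h.to_subtype
  obtain ⟨k, l, hkl, heq⟩ := Finite.exists_ne_map_eq_of_infinite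
    fun k : ℤ => (⟨γ ^ k • x, k, rfl⟩ : Set.range fun k : ℤ => γ ^ k • x)
  refine ⟨-l + k, by omega, ?_⟩
  rw [zpow_add, mul_smul, zpow_neg, inv_smul_eq_iff]
  exact congrArg Subtype.val heq

theorem Subgroup.IsComplement.eq_one_of_mem_of_mem {G : Type*} [Group G] {S T : Set G}
    (hST : IsComplement S T) (hS1 : 1 ∈ S) (hT1 : 1 ∈ T) {g : G} (hgS : g ∈ S) (hgT : g ∈ T) :
    g = 1 :=
  congrArg Subtype.val <| (hST.equiv_fst_eq_self_of_mem_of_one_mem hT1 hgS).symm.trans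
    (hST.equiv_fst_eq_one_of_mem_of_one_mem hS1 hgT)

namespace Monoid.CoprodI.Word

variable {ι : Type*} {G : ι → Type*} [∀ i, Monoid (G i)]

def mapLetters (f : ∀ i, G i ≃* G i) (w : Word G) : Word G where
  toList := w.toList.map fun l => ⟨l.1, f l.1 l.2⟩
  ne_one l hl := by
    obtain ⟨l', hl', rfl⟩ := List.mem_map.mp hl
    exact (f l'.1).map_ne_one_iff.mpr (w.ne_one l' hl')
  chain_ne := List.isChain_map _ |>.mpr w.chain_ne

@[simp]
theorem mapLetters_toList (f : ∀ i, G i ≃* G i) (w : Word G) :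
    (w.mapLetters f).toList = w.toList.map fun l => ⟨l.1, f l.1 l.2⟩ := rfl

end Monoid.CoprodI.Word

namespace Monoid.PushoutI

open CoprodI Subgroup

variable {H : Type*} [Group H] {G : Bool → Type*} [∀ i, Group (G i)] {φ : ∀ i, H →* G i}

def twistFactor (c : G false) : ∀ i, G i ≃* G i
  | false => MulAut.conj c
  | true => MulEquiv.refl _

@[simp]
theorem twistFactor_false (c x : G false) : twistFactor c false x = c * x * c⁻¹ := rfl

@[simp]
theorem twistFactor_true (c : G false) (x : G true) : twistFactor c true x = x := rfl

theorem twistFactor_apply_of_mem_range {c : G false}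
    (hc : c ∈ Subgroup.centralizer ((φ false).range : Set (G false))) {i : Bool}
    {x : G i} (hx : x ∈ (φ i).range) : twistFactor c i x = x := by
  cases i
  · rw [twistFactor_false, (mem_centralizer_iff.mp hc x hx).symm, mul_inv_cancel_right]
  · rfl

theorem twistFactor_mem_range_iff {c : G false}
    (hc : c ∈ Subgroup.centralizer ((φ false).range : Set (G false))) {i : Bool}
    {x : G i} : twistFactor c i x ∈ (φ i).range ↔ x ∈ (φ i).range := by
  refine ⟨fun h => ?_, fun h => by rwa [twistFactor_apply_of_mem_range hc h]⟩
  rwa [← (twistFactor c i).injective (twistFactor_apply_of_mem_range hc h)]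

variable (φ) in
def twistHom (c : Subgroup.centralizer ((φ false).range : Set (G false))) :
    PushoutI φ →* PushoutI φ :=
  lift (fun i => (of i).comp (twistFactor (c : G false) i).toMonoidHom) (base φ) fun i => by
    ext h
    simp [twistFactor_apply_of_mem_range c.2 (MonoidHom.mem_range.mpr ⟨h, rfl⟩),
      of_apply_eq_base]

variable (c d : Subgroup.centralizer ((φ false).range : Set (G false)))

@[simp]
theorem twistHom_of (i : Bool) (x : G i) :
    twistHom φ c (of i x) = of i (twistFactor (c : G false) i x) :=
  lift_of ..

@[simp]
theorem twistHom_base (h : H) : twistHom φ c (base φ h) = base φ h :=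
  lift_base ..

theorem twistHom_one : twistHom φ 1 = MonoidHom.id _ :=
  hom_ext_nonempty fun i => by ext x; cases i <;> simp

theorem twistHom_mul : twistHom φ (c * d) = (twistHom φ c).comp (twistHom φ d) :=
  hom_ext_nonempty fun i => by
    ext x
    simp only [MonoidHom.comp_apply, twistHom_of]
    cases i
    · rw [Subgroup.coe_mul]
      simp [mul_assoc]
    · rfl

variable (φ) in
def twist : Subgroup.centralizer ((φ false).range : Set (G false)) →* MulAut (PushoutI φ) where
  toFun c := (twistHom φ c).toMulEquiv (twistHom φ c⁻¹)
    (by rw [← twistHom_mul, inv_mul_cancel, twistHom_one])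
    (by rw [← twistHom_mul, mul_inv_cancel, twistHom_one])
  map_one' := MulEquiv.ext fun p => by simp [twistHom_one]
  map_mul' c d := MulEquiv.ext fun p => DFunLike.congr_fun (twistHom_mul c d) p

@[simp]
theorem twist_apply (p : PushoutI φ) : twist φ c p = twistHom φ c p := rfl

theorem twistHom_ofCoprodI_prod (w : Word G) :
    twistHom φ c (ofCoprodI w.prod) =
      ofCoprodI (w.mapLetters (twistFactor (c : G false))).prod := by
  simp only [Word.prod, Word.mapLetters_toList, map_list_prod, List.map_map]
  congr 1

theorem Reduced.mapLetters {w : Word G} (hw : Reduced φ w) :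
    Reduced φ (w.mapLetters (twistFactor (c : G false))) := by
  intro l hl
  simp only [Word.mapLetters_toList, List.mem_map] at hl
  obtain ⟨l, hl, rfl⟩ := hl
  exact (twistFactor_mem_range_iff c.2).not.mpr (hw l hl)

theorem Reduced.map_fst_eq_of_ofCoprodI_prod_eq (hφ : ∀ i, Function.Injective (φ i))
    {v w : Word G} (hv : Reduced φ v) (hw : Reduced φ w)
    (h : ofCoprodI (φ := φ) v.prod = ofCoprodI w.prod) :
    v.toList.map Sigma.fst = w.toList.map Sigma.fst := by
  classical
  obtain ⟨d⟩ := NormalWord.transversal_nonempty φ hφ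
  obtain ⟨V, hV, hVfst⟩ := hv.exists_normalWord_prod_eq d
  obtain ⟨W, hW, hWfst⟩ := hw.exists_normalWord_prod_eq d
  rw [← hVfst, ← hWfst, NormalWord.prod_injective (hV.trans (h.trans hW.symm))]

theorem exists_reduced_eq_base_mul (hφ : ∀ i, Function.Injective (φ i)) (p : PushoutI φ) :
    ∃ (h : H) (w : Word G), Reduced φ w ∧ p = base φ h * ofCoprodI w.prod := by
  classical
  obtain ⟨d⟩ := NormalWord.transversal_nonempty φ hφ
  let W := NormalWord.equiv (d := d) p
  refine ⟨W.head, W.toWord, fun ⟨i, x⟩ hx hxR => W.ne_one _ hx ?_, ?_⟩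
  · exact (d.compl i).eq_one_of_mem_of_mem (φ i).range.one_mem (d.one_mem i) hxR
      (W.normalized i x hx)
  · exact (NormalWord.equiv.symm_apply_apply p).symm

variable {c} in
theorem Reduced.forall_fst_eq_true_of_twistHom_eq (hφ : ∀ i, Function.Injective (φ i))
    (hc : ∀ y : G false, ⁅(c : G false), y⁆ ∈ (φ false).range → y ∈ (φ false).range)
    {w : Word G} (hw : Reduced φ w)
    (hfix : twistHom φ c (ofCoprodI w.prod) = ofCoprodI w.prod) :
    ∀ l ∈ w.toList, l.1 = true := by
  induction w using Word.consRecOn with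
  | empty => simp [Word.empty]
  | cons i x w hIdx hx1 ih =>
    have hw' : Reduced φ w := fun l hl => hw l (List.mem_cons_of_mem _ hl)
    have hxR : x ∉ (φ i).range := hw ⟨i, x⟩ List.mem_cons_self
    rw [Word.prod_cons, map_mul, ofCoprodI_of, map_mul, twistHom_of] at hfix
    cases i with
    | true => exact List.forall_mem_cons.mpr ⟨rfl, ih hw' (mul_left_cancel hfix)⟩
    | false =>
      exfalso
      set u := ⁅(c : G false), x⁻¹⁆ with hu_def
      have hT : twistHom φ c (ofCoprodI w.prod) = of false u * ofCoprodI w.prod := by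
        rw [eq_inv_mul_of_mul_eq hfix, twistFactor_false, hu_def, commutatorElement_def]
        simp only [map_mul, map_inv, mul_inv_rev, inv_inv, mul_assoc]
      have huR : u ∉ (φ false).range := fun h => hxR (inv_mem_iff.mp (hc _ h))
      have hu1 : u ≠ 1 := fun h => huR (h ▸ (φ false).range.one_mem)
      have hv : Reduced φ (Word.cons u w hIdx hu1) := by
        intro l hl
        rcases List.mem_cons.mp hl with rfl | hl
        · exact huR
        · exact hw' l hl
      -- the twisted tail and `u :: w` are reduced words with the same image but different lengths
      have hlen := congrArg List.length <|
        (hw'.mapLetters c).map_fst_eq_of_ofCoprodI_prod_eq hφ hv (by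
          rw [← twistHom_ofCoprodI_prod, hT, Word.prod_cons, map_mul, ofCoprodI_of])
      simp at hlen

variable {c} in
theorem mem_range_of_twist_eq_self (hφ : ∀ i, Function.Injective (φ i))
    (hc : ∀ y : G false, ⁅(c : G false), y⁆ ∈ (φ false).range → y ∈ (φ false).range)
    {p : PushoutI φ} (hp : twist φ c p = p) : p ∈ (of true).range := by
  obtain ⟨h, w, hw, rfl⟩ := exists_reduced_eq_base_mul hφ p
  rw [twist_apply, map_mul, twistHom_base] at hp
  have hletters := hw.forall_fst_eq_true_of_twistHom_eq hφ hc (mul_left_cancel hp)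
  refine mul_mem ⟨φ true h, of_apply_eq_base φ true h⟩ ?_
  rw [Word.prod, map_list_prod, List.map_map]
  refine list_prod_mem fun x hx => ?_
  obtain ⟨⟨i, y⟩, hl, rfl⟩ := List.mem_map.mp hx
  obtain rfl : i = true := hletters _ hl
  exact ⟨y, (ofCoprodI_of _ y).symm⟩

variable {c} in
theorem symm_apply_mem_range_of_mem_racl (hφ : ∀ i, Function.Injective (φ i))
    (hc : ∀ n : ℤ, n ≠ 0 → ∀ y : G false,
      ⁅(c : G false) ^ n, y⁆ ∈ (φ false).range → y ∈ (φ false).range)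
    {K : Type*} [Group K] (e : PushoutI φ ≃* K) {A : Set K}
    (hA : ∀ a ∈ A, e.symm a ∈ (of true).range) {g : K} (hg : g ∈ racl A) :
    e.symm g ∈ (of true).range := by
  have hfix : ∀ k : ℤ, ∀ a ∈ A, MulAut.congr e (twist φ (c ^ k)) a = a := by
    intro k a ha
    obtain ⟨x, hx⟩ := hA a ha
    rw [MulAut.congr_apply, MulEquiv.trans_apply, MulEquiv.trans_apply, ← hx, twist_apply,
      twistHom_of, twistFactor_true, hx, e.apply_symm_apply]
  have horbit : (Set.range fun k : ℤ => twist φ c ^ k • e.symm g).Finite :=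
    (hg.image e.symm).subset <| Set.range_subset_iff.mpr fun k =>
      ⟨_, ⟨_, hfix k, rfl⟩, by rw [MulAut.smul_def, ← map_zpow]; simp⟩
  obtain ⟨n, hn, hgn⟩ := exists_ne_zero_zpow_smul_eq_of_finite horbit
  rw [MulAut.smul_def, ← map_zpow] at hgn
  exact mem_range_of_twist_eq_self hφ (by simpa only [coe_zpow] using hc n hn) hgn

end Monoid.PushoutI

theorem racl_le_of_amalgam_general {G : Type*} [Group G]
    (hTF : ∀ g : G, g ≠ 1 → ¬IsOfFinOrder g) (hCSA : IsCSA G)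
    (G₁ G₂ C : Subgroup G) (h₁ : C ≤ G₁) (h₂ : C ≤ G₂)
    (hmax₂ : IsMaxAbelianIn C G₂)
    (hamal : IsAmalgamOf G₁ G₂ C h₁ h₂ ⊤)
    (A : Subgroup G) (hA : A ≤ G₁) :
    racl (A : Set G) ⊆ (G₁ : Set G) ∧ acl (A : Set G) ⊆ (G₁ : Set G) := by
  open Monoid.PushoutI Subgroup in
  have hracl : racl (A : Set G) ⊆ (G₁ : Set G) := by
    intro g hg
    obtain ⟨ℓ, hof, hinj, hrange⟩ := hamal
    let φ : ∀ i : Bool, C →* ↥(cond i G₁ G₂) := fun i =>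
      inclusion (by cases i <;> assumption)
    let e : Monoid.PushoutI φ ≃* G :=
      MulEquiv.ofBijective ℓ ⟨hinj, MonoidHom.range_eq_top.mp hrange⟩
    have he : ∀ i x, e (of i x) = x := fun i x => DFunLike.congr_fun (hof i) x
    obtain ⟨m, hmC, hm⟩ := hCSA.exists_mem_forall_mem_of_commutatorElement_zpow_mem hTF hmax₂
    let c : centralizer ((φ false).range : Set ↥(cond false G₁ G₂)) :=
      ⟨⟨m, h₂ hmC⟩, by
        rintro _ ⟨x, rfl⟩
        exact Subtype.ext (hmax₂.2.1 x x.2 m hmC)⟩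
    obtain ⟨x, hx⟩ := symm_apply_mem_range_of_mem_racl (c := c) (fun i => inclusion_injective _)
      (fun n hn y => by
        simpa [φ, mem_subgroupOf, commutatorElement_def] using hm n hn y (y.2 : (y : G) ∈ G₂))
      e (fun a ha => ⟨⟨a, hA ha⟩, (e.symm_apply_eq.mpr (he true _).symm).symm⟩) hg
    rw [← e.apply_symm_apply g, ← hx, he]
    exact x.2
  exact ⟨hracl, (acl_subset_racl _).trans hracl⟩

/-- Let `G` be a torsion-free CSA group, `G = G₁ ∗_C G₂` an
amalgamated free product over an abelian subgroup `C = G₁ ⊓ G₂` which is maximal abelian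
both in `G₁` and in `G₂`, and let `A ≤ G₁` be a subgroup. Then `racl_G(A) ⊆ G₁`; in
particular `acl(A) ⊆ G₁`. -/
theorem racl_le_of_amalgam {G : Type*} [Group G]
    (hTF : ∀ g : G, g ≠ 1 → ¬IsOfFinOrder g) (hCSA : IsCSA G)
    (G₁ G₂ C : Subgroup G) (hC : C = G₁ ⊓ G₂) (h₁ : C ≤ G₁) (h₂ : C ≤ G₂)
    (hab : ∀ x ∈ C, ∀ y ∈ C, x * y = y * x)
    (hmax₁ : IsMaxAbelianIn C G₁) (hmax₂ : IsMaxAbelianIn C G₂)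
    (hamal : IsAmalgamOf G₁ G₂ C h₁ h₂ ⊤)
    (A : Subgroup G) (hA : A ≤ G₁) :
    racl (A : Set G) ⊆ (G₁ : Set G) ∧ acl (A : Set G) ⊆ (G₁ : Set G) :=
  racl_le_of_amalgam_general hTF hCSA G₁ G₂ C h₁ h₂ hmax₂ hamal A hA
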